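/- With the Markov-chain setup below, for every ε > 0 one has P( | Σ_{i=1}^{k−1} Q(Y_i) − ν | ≥ ε ) ≤ 5·ε^{−2}·( ρ·ν² + σ ), where ν = k·Σ_{y∈S} π(y)·Q(y) and σ = k·Σ_{y∈S} π(y)·Q(y)². -/
import Mathlib


open MeasureTheory ProbabilityTheory Filter Real

noncomputable section

open Finset
set_option linter.unusedSectionVars false

noncomputable section ChainAux

variable {S : Type*} [Fintype S]

/-- weight of a path of length n (n transitions, n+1 states) -/
def TW (K : S → S → ℝ) (μ : S → ℝ) (n : ℕ) (p : Fin (n+1) → S) : ℝ :=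
  μ (p 0) * ∏ i : Fin n, K (p i.castSucc) (p i.succ)

/-- distribution after a steps -/
def cdist (K : S → S → ℝ) (μ : S → ℝ) : ℕ → S → ℝ
  | 0 => μ
  | (a+1) => fun y => ∑ x : S, cdist K μ a x * K x y

/-- iterated transition operator -/
def Tpow (K : S → S → ℝ) : ℕ → (S → ℝ) → S → ℝ
  | 0, g => g
  | (d+1), g => fun x => ∑ y : S, K x y * Tpow K d g y

variable {K : S → S → ℝ} {μ : S → ℝ}

lemma sum_snoc (j : ℕ) (F : (Fin (j+2) → S) → ℝ) :
    ∑ p : Fin (j+2) → S, F p = ∑ q : Fin (j+1) → S, ∑ y : S, F (Fin.snoc q y) := by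
  rw [← (Fin.snocEquiv (fun _ => S)).sum_comp F]
  rw [Fintype.sum_prod_type, Finset.sum_comm]
  rfl

lemma TW_snoc (j : ℕ) (q : Fin (j+1) → S) (y : S) :
    TW K μ (j+1) (Fin.snoc q y) = TW K μ j q * K (q (Fin.last j)) y := by
  unfold TW
  rw [Fin.prod_univ_castSucc]
  have h0 : (Fin.snoc q y : Fin (j+2) → S) 0 = q 0 := by
    have : (0 : Fin (j+2)) = Fin.castSucc 0 := rfl
    rw [this, Fin.snoc_castSucc]
  simp only [h0, Fin.succ_castSucc, Fin.snoc_castSucc, Fin.succ_last, Fin.snoc_last]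
  ring

lemma peel (j : ℕ) (F : (Fin (j+1) → S) → ℝ) (g : S → ℝ) :
    ∑ p : Fin (j+2) → S, TW K μ (j+1) p * F (Fin.init p) * g (p (Fin.last (j+1)))
    = ∑ q : Fin (j+1) → S, TW K μ j q * F q * (∑ y : S, K (q (Fin.last j)) y * g y) := by
  rw [sum_snoc]
  refine Finset.sum_congr rfl (fun q _ => ?_)
  rw [Finset.mul_sum]
  refine Finset.sum_congr rfl (fun y _ => ?_)
  rw [TW_snoc, Fin.init_snoc, Fin.snoc_last]
  ring


lemma E1 (hKrow : ∀ x, ∑ y : S, K x y = 1) :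
    ∀ (j : ℕ) (h : S → ℝ),
    ∑ p : Fin (j+1) → S, TW K μ j p * h (p (Fin.last j)) = ∑ x : S, cdist K μ j x * h x := by
  intro j
  induction j with
  | zero =>
    intro h
    rw [← (Equiv.funUnique (Fin 1) S).symm.sum_comp (fun p => TW K μ 0 p * h (p (Fin.last 0)))]
    simp only [TW, Finset.univ_eq_empty, Finset.prod_empty, mul_one, Equiv.funUnique_symm_apply]
    rfl
  | succ j ih =>
    intro h
    have hpeel := peel (K := K) (μ := μ) j (fun _ => 1) h
    simp only [mul_one] at hpeel
    rw [hpeel, ih (fun x => ∑ y : S, K x y * h y)]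
    show ∑ x : S, cdist K μ j x * (∑ y : S, K x y * h y)
        = ∑ y : S, (∑ x : S, cdist K μ j x * K x y) * h y
    simp only [Finset.mul_sum, Finset.sum_mul]
    rw [Finset.sum_comm]
    exact Finset.sum_congr rfl (fun y _ => Finset.sum_congr rfl (fun x _ => by ring))

lemma Tpow_zero (g : S → ℝ) : Tpow K 0 g = g := rfl

lemma Tpow_one (g : S → ℝ) : Tpow K 1 g = fun x => ∑ y : S, K x y * g y := rfl

lemma Tpow_succ_comm (d : ℕ) (g : S → ℝ) :
    Tpow K (d+1) g = Tpow K d (Tpow K 1 g) := by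
  induction d with
  | zero => rfl
  | succ d ih =>
    funext x
    show ∑ y : S, K x y * Tpow K (d+1) g y = ∑ y : S, K x y * Tpow K d (Tpow K 1 g) y
    rw [ih]

/-- main workhorse: two-point correlations -/
lemma E2 (hKrow : ∀ x, ∑ y : S, K x y = 1) :
    ∀ (j a b : ℕ) (hab : a ≤ b) (hbj : b ≤ j) (f g : S → ℝ),
    ∑ p : Fin (j+1) → S, TW K μ j p * f (p ⟨a, by omega⟩) * g (p ⟨b, by omega⟩)
    = ∑ x : S, cdist K μ a x * f x * Tpow K (b-a) g x := by
  intro j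
  induction j with
  | zero =>
    intro a b hab hbj f g
    have hb0 : b = 0 := by omega
    subst hb0
    have ha0 : a = 0 := by omega
    subst ha0
    calc ∑ p : Fin 1 → S, TW K μ 0 p * f (p ⟨0, by omega⟩) * g (p ⟨0, by omega⟩)
        = ∑ p : Fin 1 → S, TW K μ 0 p * (f (p (Fin.last 0)) * g (p (Fin.last 0))) :=
          Finset.sum_congr rfl (fun p _ => by
            show TW K μ 0 p * f (p ⟨0, by omega⟩) * g (p ⟨0, by omega⟩)
              = TW K μ 0 p * (f (p ⟨0, by omega⟩) * g (p ⟨0, by omega⟩))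
            ring)
      _ = ∑ x : S, cdist K μ 0 x * (f x * g x) := E1 hKrow 0 (fun x => f x * g x)
      _ = ∑ x : S, cdist K μ 0 x * f x * Tpow K (0-0) g x :=
          Finset.sum_congr rfl (fun x _ => by show _ = _ * _ * g x; ring)
  | succ j ih =>
    intro a b hab hbj f g
    rcases Nat.lt_or_ge b (j+1) with hb | hb
    · -- b ≤ j : drop the last coordinate
      have hpeel := peel (K := K) (μ := μ) j
        (fun q => f (q ⟨a, by omega⟩) * g (q ⟨b, by omega⟩)) (fun _ => 1)
      simp only [hKrow, mul_one] at hpeel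
      have hL : ∀ p : Fin (j+2) → S,
          TW K μ (j+1) p * f (p ⟨a, by omega⟩) * g (p ⟨b, by omega⟩)
          = TW K μ (j+1) p * (f (Fin.init p ⟨a, by omega⟩) * g (Fin.init p ⟨b, by omega⟩)) := by
        intro p
        show _ = _ * (f (p (Fin.castSucc ⟨a, by omega⟩)) * g (p (Fin.castSucc ⟨b, by omega⟩)))
        have ha' : (Fin.castSucc (⟨a, by omega⟩ : Fin (j+1))) = (⟨a, by omega⟩ : Fin (j+2)) := rfl
        have hb' : (Fin.castSucc (⟨b, by omega⟩ : Fin (j+1))) = (⟨b, by omega⟩ : Fin (j+2)) := rfl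
        rw [ha', hb']; ring
      rw [Finset.sum_congr rfl (fun p _ => hL p), hpeel]
      rw [← ih a b hab (by omega) f g]
      exact Finset.sum_congr rfl (fun q _ => by ring)
    · -- b = j+1
      have hbeq : b = j + 1 := by omega
      subst hbeq
      rcases Nat.lt_or_ge a (j+1) with ha | ha
      · -- a ≤ j, g sits at the last coordinate
        have hpeel := peel (K := K) (μ := μ) j (fun q => f (q ⟨a, by omega⟩)) g
        have hL : ∀ p : Fin (j+2) → S,
            TW K μ (j+1) p * f (p ⟨a, by omega⟩) * g (p ⟨j+1, by omega⟩)
            = TW K μ (j+1) p * f (Fin.init p ⟨a, by omega⟩) * g (p (Fin.last (j+1))) := by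
          intro p
          show _ = _ * f (p (Fin.castSucc ⟨a, by omega⟩)) * _
          have ha' : (Fin.castSucc (⟨a, by omega⟩ : Fin (j+1))) = (⟨a, by omega⟩ : Fin (j+2)) := rfl
          have hb' : (Fin.last (j+1)) = (⟨j+1, by omega⟩ : Fin (j+2)) := rfl
          rw [ha', hb']
        rw [Finset.sum_congr rfl (fun p _ => hL p), hpeel]
        have := ih a j (by omega) (le_refl j) f (Tpow K 1 g)
        have hq : ∀ q : Fin (j+1) → S,
            TW K μ j q * f (q ⟨a, by omega⟩) * (∑ y : S, K (q (Fin.last j)) y * g y)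
            = TW K μ j q * f (q ⟨a, by omega⟩) * Tpow K 1 g (q ⟨j, by omega⟩) := by
          intro q
          have : Fin.last j = (⟨j, by omega⟩ : Fin (j+1)) := rfl
          rw [this]; rfl
        rw [Finset.sum_congr rfl (fun q _ => hq q), this]
        have harith : j + 1 - a = (j - a) + 1 := by omega
        rw [harith]
        exact Finset.sum_congr rfl (fun x _ => by rw [← Tpow_succ_comm])
      · -- a = b = j+1 : both at the last coordinate
        have haeq : a = j + 1 := by omega
        subst haeq
        have hE := E1 (K := K) (μ := μ) hKrow (j+1) (fun x => f x * g x)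
        have hlast : (Fin.last (j+1)) = (⟨j+1, by omega⟩ : Fin (j+2)) := rfl
        rw [hlast] at hE
        calc ∑ p : Fin (j+2) → S, TW K μ (j+1) p * f (p ⟨j+1, by omega⟩) * g (p ⟨j+1, by omega⟩)
            = ∑ p : Fin (j+2) → S, TW K μ (j+1) p * (f (p ⟨j+1, by omega⟩) * g (p ⟨j+1, by omega⟩)) :=
              Finset.sum_congr rfl (fun p _ => by ring)
          _ = ∑ x : S, cdist K μ (j+1) x * (f x * g x) := hE
          _ = ∑ x : S, cdist K μ (j+1) x * f x * Tpow K (j+1-(j+1)) g x := by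
              have h00 : j + 1 - (j+1) = 0 := by omega
              rw [h00]
              exact Finset.sum_congr rfl (fun x _ => by show _ = _ * _ * g x; ring)


lemma TW_nonneg (hK0 : ∀ x y, 0 ≤ K x y) (hμ0 : ∀ x, 0 ≤ μ x) (n : ℕ) (p : Fin (n+1) → S) :
    0 ≤ TW K μ n p :=
  mul_nonneg (hμ0 _) (Finset.prod_nonneg fun _ _ => hK0 _ _)

lemma cdist_nonneg (hK0 : ∀ x y, 0 ≤ K x y) (hμ0 : ∀ x, 0 ≤ μ x) :
    ∀ (j : ℕ) (x : S), 0 ≤ cdist K μ j x := by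
  intro j
  induction j with
  | zero => exact hμ0
  | succ j ih =>
    intro x
    exact Finset.sum_nonneg fun y _ => mul_nonneg (ih y) (hK0 y x)

lemma cdist_sum (hKrow : ∀ x, ∑ y : S, K x y = 1) (hμ1 : ∑ x : S, μ x = 1) :
    ∀ j : ℕ, ∑ x : S, cdist K μ j x = 1 := by
  intro j
  induction j with
  | zero => exact hμ1
  | succ j ih =>
    show ∑ x : S, ∑ y : S, cdist K μ j y * K y x = 1
    rw [Finset.sum_comm]
    calc ∑ y : S, ∑ x : S, cdist K μ j y * K y x
        = ∑ y : S, cdist K μ j y * ∑ x : S, K y x := by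
          exact Finset.sum_congr rfl fun y _ => (Finset.mul_sum ..).symm
      _ = 1 := by simp only [hKrow, mul_one]; exact ih

lemma cdist_close {pin : S → ℝ} {ρ : ℝ}
    (hK0 : ∀ x y, 0 ≤ K x y) (hKrow : ∀ x, ∑ y : S, K x y = 1)
    (hμ0 : ∀ x, 0 ≤ μ x) (hμ1 : ∑ x : S, μ x = 1)
    (hmix : ∀ x y, |K x y - pin y| ≤ ρ * pin y) (j : ℕ) (x : S) :
    |cdist K μ (j+1) x - pin x| ≤ ρ * pin x := by
  have hsum := cdist_sum (K := K) (μ := μ) hKrow hμ1 j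
  have h1 : cdist K μ (j+1) x - pin x = ∑ y : S, cdist K μ j y * (K y x - pin x) := by
    show (∑ y : S, cdist K μ j y * K y x) - pin x = _
    rw [Finset.sum_congr rfl (fun y (_ : y ∈ Finset.univ) => mul_sub (cdist K μ j y) (K y x) (pin x)),
      Finset.sum_sub_distrib, ← Finset.sum_mul, hsum, one_mul]
  rw [h1]
  calc |∑ y : S, cdist K μ j y * (K y x - pin x)|
      ≤ ∑ y : S, |cdist K μ j y * (K y x - pin x)| := Finset.abs_sum_le_sum_abs _ _
    _ ≤ ∑ y : S, cdist K μ j y * (ρ * pin x) := by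
        refine Finset.sum_le_sum fun y _ => ?_
        rw [abs_mul, abs_of_nonneg (cdist_nonneg hK0 hμ0 j y)]
        exact mul_le_mul_of_nonneg_left (hmix y x) (cdist_nonneg hK0 hμ0 j y)
    _ = ρ * pin x := by rw [← Finset.sum_mul, hsum, one_mul]

lemma Tpow_bound {pin : S → ℝ} {ρ : ℝ} {Q : S → ℝ} {m : ℝ}
    (hK0 : ∀ x y, 0 ≤ K x y) (hKrow : ∀ x, ∑ y : S, K x y = 1)
    (hpin0 : ∀ x, 0 ≤ pin x)
    (hmix : ∀ x y, |K x y - pin y| ≤ ρ * pin y)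
    (hQ0 : ∀ y, 0 ≤ Q y) (hm : m = ∑ y : S, pin y * Q y) :
    ∀ (d : ℕ) (x : S), |Tpow K (d+1) (fun y => Q y - m) x| ≤ ρ * m := by
  intro d
  induction d with
  | zero =>
    intro x
    show |∑ y : S, K x y * (Q y - m)| ≤ ρ * m
    have h1 : ∑ y : S, K x y * (Q y - m) = ∑ y : S, (K x y - pin y) * Q y := by
      have e1 : ∑ y : S, K x y * (Q y - m) = (∑ y : S, K x y * Q y) - m := by
        rw [Finset.sum_congr rfl (fun y (_ : y ∈ Finset.univ) => mul_sub (K x y) (Q y) m),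
          Finset.sum_sub_distrib, ← Finset.sum_mul, hKrow, one_mul]
      have e2 : ∑ y : S, (K x y - pin y) * Q y = (∑ y : S, K x y * Q y) - m := by
        rw [Finset.sum_congr rfl (fun y (_ : y ∈ Finset.univ) => sub_mul (K x y) (pin y) (Q y)),
          Finset.sum_sub_distrib, hm]
      rw [e1, e2]
    rw [h1]
    calc |∑ y : S, (K x y - pin y) * Q y| ≤ ∑ y : S, |(K x y - pin y) * Q y| :=
          Finset.abs_sum_le_sum_abs _ _
      _ ≤ ∑ y : S, ρ * pin y * Q y := by
          refine Finset.sum_le_sum fun y _ => ?_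
          rw [abs_mul, abs_of_nonneg (hQ0 y)]
          exact mul_le_mul_of_nonneg_right (hmix x y) (hQ0 y)
      _ = ρ * m := by
          rw [hm, Finset.mul_sum]
          exact Finset.sum_congr rfl fun y _ => by ring
  | succ d ih =>
    intro x
    show |∑ y : S, K x y * Tpow K (d+1) (fun y => Q y - m) y| ≤ ρ * m
    calc |∑ y : S, K x y * Tpow K (d+1) (fun y => Q y - m) y|
        ≤ ∑ y : S, |K x y * Tpow K (d+1) (fun y => Q y - m) y| := Finset.abs_sum_le_sum_abs _ _
      _ ≤ ∑ y : S, K x y * (ρ * m) := by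
          refine Finset.sum_le_sum fun y _ => ?_
          rw [abs_mul, abs_of_nonneg (hK0 x y)]
          exact mul_le_mul_of_nonneg_left (ih y) (hK0 x y)
      _ = ρ * m := by rw [← Finset.sum_mul, hKrow, one_mul]


section Bounds

variable {pin : S → ℝ} {ρ : ℝ} {Q : S → ℝ} {m s : ℝ}
variable (hK0 : ∀ x y, 0 ≤ K x y) (hKrow : ∀ x, ∑ y : S, K x y = 1)
variable (hμ0 : ∀ x, 0 ≤ μ x) (hμ1 : ∑ x : S, μ x = 1)
variable (hpin0 : ∀ x, 0 ≤ pin x) (hpin1 : ∑ x : S, pin x = 1)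
variable (hρ0 : 0 ≤ ρ) (hρ1 : ρ ≤ 1)
variable (hmix : ∀ x y, |K x y - pin y| ≤ ρ * pin y)
variable (hQ0 : ∀ y, 0 ≤ Q y)
variable (hm : m = ∑ y : S, pin y * Q y) (hs : s = ∑ y : S, pin y * Q y ^ 2)

include hK0 hKrow hμ0 hμ1 hρ1 hmix in
lemma cdist_le_two (j : ℕ) (x : S) (hpx : 0 ≤ pin x) : cdist K μ (j+1) x ≤ 2 * pin x := by
  have h := abs_le.mp (cdist_close hK0 hKrow hμ0 hμ1 hmix (j := j) (x := x))
  nlinarith [h.2]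

include hpin0 hQ0 hm in
lemma m_nonneg : 0 ≤ m := by
  rw [hm]; exact Finset.sum_nonneg fun y _ => mul_nonneg (hpin0 y) (hQ0 y)

include hK0 hKrow hμ0 hμ1 hpin0 hpin1 hρ1 hmix hQ0 hm hs in
lemma key_diag (j : ℕ) :
    ∑ x : S, cdist K μ (j+1) x * (Q x - m) * (Q x - m) ≤ 2 * s := by
  calc ∑ x : S, cdist K μ (j+1) x * (Q x - m) * (Q x - m)
      ≤ ∑ x : S, 2 * pin x * ((Q x - m) * (Q x - m)) := by
        refine Finset.sum_le_sum fun x _ => ?_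
        rw [mul_assoc]
        exact mul_le_mul_of_nonneg_right (cdist_le_two hK0 hKrow hμ0 hμ1 hρ1 hmix j x (hpin0 x))
          (mul_self_nonneg _)
    _ = ∑ x : S, (2 * (pin x * Q x ^ 2) - 4 * m * (pin x * Q x) + 2 * m ^ 2 * pin x) :=
        Finset.sum_congr rfl fun x _ => by ring
    _ = 2 * s - 4 * m * m + 2 * m ^ 2 * 1 := by
        rw [Finset.sum_add_distrib, Finset.sum_sub_distrib, ← Finset.mul_sum, ← Finset.mul_sum,
          ← Finset.mul_sum, hpin1, ← hs, ← hm]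
    _ ≤ 2 * s := by nlinarith [mul_self_nonneg m]

include hK0 hKrow hμ0 hμ1 hpin0 hpin1 hρ0 hρ1 hmix hQ0 hm in
lemma key_offdiag (j d : ℕ) :
    |∑ x : S, cdist K μ (j+1) x * (Q x - m) * Tpow K (d+1) (fun y => Q y - m) x|
      ≤ 3 * ρ * m ^ 2 := by
  have hm0 : 0 ≤ m := m_nonneg hpin0 hQ0 hm
  have hd0 : ∀ x, 0 ≤ cdist K μ (j+1) x := cdist_nonneg hK0 hμ0 (j+1)
  calc |∑ x : S, cdist K μ (j+1) x * (Q x - m) * Tpow K (d+1) (fun y => Q y - m) x|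
      ≤ ∑ x : S, |cdist K μ (j+1) x * (Q x - m) * Tpow K (d+1) (fun y => Q y - m) x| :=
        Finset.abs_sum_le_sum_abs _ _
    _ ≤ ∑ x : S, cdist K μ (j+1) x * (Q x + m) * (ρ * m) := by
        refine Finset.sum_le_sum fun x _ => ?_
        rw [abs_mul, abs_mul, abs_of_nonneg (hd0 x)]
        refine mul_le_mul ?_ (Tpow_bound hK0 hKrow hpin0 hmix hQ0 hm d x) (abs_nonneg _) ?_
        · refine mul_le_mul_of_nonneg_left ?_ (hd0 x)
          calc |Q x - m| ≤ |Q x| + |m| := abs_sub _ _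
            _ = Q x + m := by rw [abs_of_nonneg (hQ0 x), abs_of_nonneg hm0]
        · exact mul_nonneg (hd0 x) (add_nonneg (hQ0 x) hm0)
    _ = (∑ x : S, cdist K μ (j+1) x * (Q x + m)) * (ρ * m) := (Finset.sum_mul ..).symm
    _ ≤ (2 * m + m) * (ρ * m) := by
        refine mul_le_mul_of_nonneg_right ?_ (mul_nonneg hρ0 hm0)
        calc ∑ x : S, cdist K μ (j+1) x * (Q x + m)
            = (∑ x : S, cdist K μ (j+1) x * Q x) + m * ∑ x : S, cdist K μ (j+1) x := by
              rw [Finset.mul_sum, ← Finset.sum_add_distrib]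
              exact Finset.sum_congr rfl fun x _ => by ring
          _ ≤ 2 * m + m * 1 := by
              rw [cdist_sum hKrow hμ1 (j+1)]
              refine add_le_add ?_ le_rfl
              calc ∑ x : S, cdist K μ (j+1) x * Q x ≤ ∑ x : S, 2 * pin x * Q x :=
                    Finset.sum_le_sum fun x _ => mul_le_mul_of_nonneg_right
                      (cdist_le_two hK0 hKrow hμ0 hμ1 hρ1 hmix j x (hpin0 x)) (hQ0 x)
                _ = 2 * m := by
                    rw [hm, Finset.mul_sum]
                    exact Finset.sum_congr rfl fun x _ => by ring
          _ = 2 * m + m := by ring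
    _ = 3 * ρ * m ^ 2 := by ring

include hK0 hKrow hμ0 hμ1 hpin0 hpin1 hρ0 hρ1 hmix hQ0 hm in
lemma key_B (j : ℕ) :
    |∑ x : S, cdist K μ (j+1) x * (Q x - m)| ≤ 2 * ρ * m := by
  have hm0 : 0 ≤ m := m_nonneg hpin0 hQ0 hm
  have hzero : ∑ x : S, pin x * (Q x - m) = 0 := by
    rw [Finset.sum_congr rfl (fun x (_ : x ∈ Finset.univ) => mul_sub (pin x) (Q x) m),
      Finset.sum_sub_distrib, ← Finset.sum_mul, hpin1, ← hm]
    ring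
  have hsplit : ∑ x : S, cdist K μ (j+1) x * (Q x - m)
      = ∑ x : S, (cdist K μ (j+1) x - pin x) * (Q x - m) := by
    rw [Finset.sum_congr rfl
      (fun x (_ : x ∈ Finset.univ) => sub_mul (cdist K μ (j+1) x) (pin x) (Q x - m)),
      Finset.sum_sub_distrib, hzero, sub_zero]
  rw [hsplit]
  calc |∑ x : S, (cdist K μ (j+1) x - pin x) * (Q x - m)|
      ≤ ∑ x : S, |(cdist K μ (j+1) x - pin x) * (Q x - m)| := Finset.abs_sum_le_sum_abs _ _
    _ ≤ ∑ x : S, ρ * pin x * (Q x + m) := by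
        refine Finset.sum_le_sum fun x _ => ?_
        rw [abs_mul]
        refine mul_le_mul (cdist_close hK0 hKrow hμ0 hμ1 hmix j x) ?_ (abs_nonneg _)
          (mul_nonneg hρ0 (hpin0 x))
        calc |Q x - m| ≤ |Q x| + |m| := abs_sub _ _
          _ = Q x + m := by rw [abs_of_nonneg (hQ0 x), abs_of_nonneg hm0]
    _ = ρ * m + ρ * m * 1 := by
        rw [show (fun x => ρ * pin x * (Q x + m)) = fun x => ρ * (pin x * Q x) + ρ * m * pin x
          from funext fun x => by ring]
        rw [Finset.sum_add_distrib, ← Finset.mul_sum, ← Finset.mul_sum, hpin1, ← hm]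
    _ = 2 * ρ * m := by ring

end Bounds
end ChainAux

theorem chain_concentration
    {S : Type*} [Fintype S] [Nonempty S]
    (K : S → S → ℝ) (hK0 : ∀ x y, 0 ≤ K x y) (hK1 : ∀ x y, K x y ≤ 1)
    (hKrow : ∀ x, ∑ y : S, K x y = 1)
    (pin : S → ℝ) (hpin0 : ∀ x, 0 ≤ pin x) (hpin1 : ∑ x : S, pin x = 1)
    (hinv : ∀ y, ∑ x : S, pin x * K x y = pin y)
    (ρ : ℝ) (hρ0 : 0 ≤ ρ) (hρ1 : ρ ≤ 1)
    (hmix : ∀ x y, |K x y - pin y| ≤ ρ * pin y)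
    (μ : S → ℝ) (hμ0 : ∀ x, 0 ≤ μ x) (hμ1 : ∑ x : S, μ x = 1)
    (k : ℕ) (hk : 2 ≤ k)
    (Q : S → ℝ) (hQ0 : ∀ y, 0 ≤ Q y) (hQ1 : ∀ y, Q y ≤ 1)
    (ε : ℝ) (hε : 0 < ε) :
    ∑ p : Fin k → S,
        (if ε ≤ |(∑ i : Fin (k - 1), Q (p ⟨i.val + 1, by have := i.2; omega⟩)) -
              k * ∑ y : S, pin y * Q y| then
          μ (p ⟨0, by omega⟩) *
            ∏ i : Fin (k - 1),
              K (p ⟨i.val, by have := i.2; omega⟩) (p ⟨i.val + 1, by have := i.2; omega⟩)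
        else 0)
      ≤ 5 / ε ^ 2 *
          (ρ * (k * ∑ y : S, pin y * Q y) ^ 2 + k * ∑ y : S, pin y * Q y ^ 2) := by
  obtain ⟨n, rfl⟩ : ∃ n, k = n + 1 := ⟨k - 1, by omega⟩
  have hn : 1 ≤ n := by omega
  set m := ∑ y : S, pin y * Q y with hm
  set s := ∑ y : S, pin y * Q y ^ 2 with hs
  have hm0 : 0 ≤ m := m_nonneg hpin0 hQ0 hm
  have hs0 : 0 ≤ s := by
    rw [hs]; exact Finset.sum_nonneg fun y _ => mul_nonneg (hpin0 y) (sq_nonneg _)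
  -- Cauchy–Schwarz : m^2 ≤ s
  have hms : m ^ 2 ≤ s := by
    have hcs := Finset.sum_mul_sq_le_sq_mul_sq Finset.univ
      (fun x => Real.sqrt (pin x)) (fun x => Real.sqrt (pin x) * Q x)
    have e1 : ∑ x : S, Real.sqrt (pin x) * (Real.sqrt (pin x) * Q x) = m := by
      rw [hm]
      exact Finset.sum_congr rfl fun x _ => by
        rw [← mul_assoc, Real.mul_self_sqrt (hpin0 x)]
    have e2 : ∑ x : S, Real.sqrt (pin x) ^ 2 = 1 := by
      rw [← hpin1]
      exact Finset.sum_congr rfl fun x _ => Real.sq_sqrt (hpin0 x)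
    have e3 : ∑ x : S, (Real.sqrt (pin x) * Q x) ^ 2 = s := by
      rw [hs]
      exact Finset.sum_congr rfl fun x _ => by
        rw [mul_pow, Real.sq_sqrt (hpin0 x)]
    rw [e1, e2, e3, one_mul] at hcs
    exact hcs
  clear_value m s
  show ∑ p : Fin (n+1) → S,
      (if ε ≤ |(∑ i : Fin n, Q (p i.succ)) - ↑(n+1) * m| then TW K μ n p else 0)
    ≤ 5 / ε ^ 2 * (ρ * (↑(n+1) * m) ^ 2 + ↑(n+1) * s)
  have hTW0 : ∀ p : Fin (n+1) → S, 0 ≤ TW K μ n p := TW_nonneg hK0 hμ0 n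
  have hTW1 : ∑ p : Fin (n+1) → S, TW K μ n p = 1 := by
    have hE := E1 (K := K) (μ := μ) hKrow n (fun _ => 1)
    simp only [mul_one] at hE
    rw [hE, cdist_sum hKrow hμ1]
  have hDform : ∀ p : Fin (n+1) → S,
      (∑ i : Fin n, Q (p i.succ)) - ↑(n+1) * m = (∑ i : Fin n, (Q (p i.succ) - m)) - m := by
    intro p
    rw [Finset.sum_sub_distrib, Finset.sum_const, Finset.card_univ, Fintype.card_fin,
      nsmul_eq_mul]
    push_cast
    ring
  -- the B and C quantities
  have hB : ∀ i : Fin n,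
      |∑ p : Fin (n+1) → S, TW K μ n p * (Q (p i.succ) - m)| ≤ 2 * ρ * m := by
    intro i
    have hE := E2 (K := K) (μ := μ) hKrow n (i.val+1) (i.val+1) le_rfl (by omega)
      (fun y => Q y - m) (fun _ => 1)
    simp only [Nat.sub_self, Tpow_zero, mul_one] at hE
    have hE' : (∑ p : Fin (n+1) → S, TW K μ n p * (Q (p i.succ) - m))
        = ∑ x : S, cdist K μ (i.val+1) x * (Q x - m) := hE
    rw [hE']
    exact key_B hK0 hKrow hμ0 hμ1 hpin0 hpin1 hρ0 hρ1 hmix hQ0 hm i.val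
  have hCdiag : ∀ i : Fin n,
      (∑ p : Fin (n+1) → S, TW K μ n p * ((Q (p i.succ) - m) * (Q (p i.succ) - m))) ≤ 2 * s := by
    intro i
    have hE := E2 (K := K) (μ := μ) hKrow n (i.val+1) (i.val+1) le_rfl (by omega)
      (fun y => Q y - m) (fun y => Q y - m)
    simp only [Nat.sub_self, Tpow_zero] at hE
    have hE' : (∑ p : Fin (n+1) → S, TW K μ n p * (Q (p i.succ) - m) * (Q (p i.succ) - m))
        = ∑ x : S, cdist K μ (i.val+1) x * (Q x - m) * (Q x - m) := hE
    calc ∑ p : Fin (n+1) → S, TW K μ n p * ((Q (p i.succ) - m) * (Q (p i.succ) - m))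
        = ∑ p : Fin (n+1) → S, TW K μ n p * (Q (p i.succ) - m) * (Q (p i.succ) - m) :=
          Finset.sum_congr rfl fun p _ => by ring
      _ = ∑ x : S, cdist K μ (i.val+1) x * (Q x - m) * (Q x - m) := hE'
      _ ≤ 2 * s := key_diag hK0 hKrow hμ0 hμ1 hpin0 hpin1 hρ1 hmix hQ0 hm hs i.val
  have hCoffLT : ∀ i j : Fin n, i.val < j.val →
      (∑ p : Fin (n+1) → S, TW K μ n p * ((Q (p i.succ) - m) * (Q (p j.succ) - m)))
        ≤ 3 * ρ * m ^ 2 := by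
    intro i j hij
    have hE := E2 (K := K) (μ := μ) hKrow n (i.val+1) (j.val+1) (by omega) (by omega)
      (fun y => Q y - m) (fun y => Q y - m)
    have harith : j.val + 1 - (i.val + 1) = (j.val - i.val - 1) + 1 := by omega
    rw [harith] at hE
    have hE' : (∑ p : Fin (n+1) → S, TW K μ n p * (Q (p i.succ) - m) * (Q (p j.succ) - m))
        = ∑ x : S, cdist K μ (i.val+1) x * (Q x - m)
            * Tpow K ((j.val - i.val - 1) + 1) (fun y => Q y - m) x := hE
    calc ∑ p : Fin (n+1) → S, TW K μ n p * ((Q (p i.succ) - m) * (Q (p j.succ) - m))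
        = ∑ p : Fin (n+1) → S, TW K μ n p * (Q (p i.succ) - m) * (Q (p j.succ) - m) :=
          Finset.sum_congr rfl fun p _ => by ring
      _ = ∑ x : S, cdist K μ (i.val+1) x * (Q x - m)
            * Tpow K ((j.val - i.val - 1) + 1) (fun y => Q y - m) x := hE'
      _ ≤ |∑ x : S, cdist K μ (i.val+1) x * (Q x - m)
            * Tpow K ((j.val - i.val - 1) + 1) (fun y => Q y - m) x| := le_abs_self _
      _ ≤ 3 * ρ * m ^ 2 :=
          key_offdiag hK0 hKrow hμ0 hμ1 hpin0 hpin1 hρ0 hρ1 hmix hQ0 hm i.val _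
  have hCoff : ∀ i j : Fin n, i ≠ j →
      (∑ p : Fin (n+1) → S, TW K μ n p * ((Q (p i.succ) - m) * (Q (p j.succ) - m)))
        ≤ 3 * ρ * m ^ 2 := by
    intro i j hij
    rcases Nat.lt_or_ge i.val j.val with h | h
    · exact hCoffLT i j h
    · have h2 : j.val < i.val := by
        rcases Nat.lt_or_ge j.val i.val with h' | h'
        · exact h'
        · exact absurd (Fin.ext (by omega)) hij
      calc ∑ p : Fin (n+1) → S, TW K μ n p * ((Q (p i.succ) - m) * (Q (p j.succ) - m))
          = ∑ p : Fin (n+1) → S, TW K μ n p * ((Q (p j.succ) - m) * (Q (p i.succ) - m)) :=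
            Finset.sum_congr rfl fun p _ => by ring
        _ ≤ 3 * ρ * m ^ 2 := hCoffLT j i h2
  -- expand the square
  have hexpand : ∑ p : Fin (n+1) → S, TW K μ n p * ((∑ i : Fin n, Q (p i.succ)) - ↑(n+1) * m) ^ 2
      = (∑ i : Fin n, ∑ j : Fin n,
          ∑ p : Fin (n+1) → S, TW K μ n p * ((Q (p i.succ) - m) * (Q (p j.succ) - m)))
        - 2 * m * (∑ i : Fin n, ∑ p : Fin (n+1) → S, TW K μ n p * (Q (p i.succ) - m))
        + m ^ 2 := by
    have hAA : ∀ p : Fin (n+1) → S,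
        (∑ i : Fin n, (Q (p i.succ) - m)) * (∑ j : Fin n, (Q (p j.succ) - m))
        = ∑ i : Fin n, ∑ j : Fin n, (Q (p i.succ) - m) * (Q (p j.succ) - m) :=
      fun p => Finset.sum_mul_sum _ _ _ _
    calc ∑ p : Fin (n+1) → S, TW K μ n p * ((∑ i : Fin n, Q (p i.succ)) - ↑(n+1) * m) ^ 2
        = ∑ p : Fin (n+1) → S,
            ((∑ i : Fin n, ∑ j : Fin n,
                TW K μ n p * ((Q (p i.succ) - m) * (Q (p j.succ) - m)))
              - 2 * m * (∑ i : Fin n, TW K μ n p * (Q (p i.succ) - m))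
              + m ^ 2 * TW K μ n p) := by
          refine Finset.sum_congr rfl fun p _ => ?_
          have e2 : TW K μ n p * ((∑ i : Fin n, (Q (p i.succ) - m)) * (∑ j : Fin n, (Q (p j.succ) - m)))
              = ∑ i : Fin n, ∑ j : Fin n,
                  TW K μ n p * ((Q (p i.succ) - m) * (Q (p j.succ) - m)) := by
            rw [hAA p, Finset.mul_sum]
            exact Finset.sum_congr rfl fun i _ => Finset.mul_sum _ _ _
          have e3 : TW K μ n p * (∑ i : Fin n, (Q (p i.succ) - m))
              = ∑ i : Fin n, TW K μ n p * (Q (p i.succ) - m) := Finset.mul_sum _ _ _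
          rw [hDform p, ← e2, ← e3]
          ring
      _ = _ := by
          rw [Finset.sum_add_distrib, Finset.sum_sub_distrib]
          congr 1
          · congr 1
            · rw [Finset.sum_comm]
              exact Finset.sum_congr rfl fun i _ => Finset.sum_comm
            · rw [← Finset.mul_sum, Finset.sum_comm]
          · rw [← Finset.mul_sum, hTW1, mul_one]
  -- numeric bound on the second moment
  have main : ∑ p : Fin (n+1) → S, TW K μ n p * ((∑ i : Fin n, Q (p i.succ)) - ↑(n+1) * m) ^ 2
      ≤ 5 * (ρ * (↑(n+1) * m) ^ 2 + ↑(n+1) * s) := by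
    rw [hexpand]
    have hCC : (∑ i : Fin n, ∑ j : Fin n,
          ∑ p : Fin (n+1) → S, TW K μ n p * ((Q (p i.succ) - m) * (Q (p j.succ) - m)))
        ≤ (n : ℝ) * ((2 * s - 3 * ρ * m ^ 2) + (n : ℝ) * (3 * ρ * m ^ 2)) := by
      calc (∑ i : Fin n, ∑ j : Fin n,
            ∑ p : Fin (n+1) → S, TW K μ n p * ((Q (p i.succ) - m) * (Q (p j.succ) - m)))
          ≤ ∑ i : Fin n, ∑ j : Fin n, (if i = j then 2 * s else 3 * ρ * m ^ 2) := by
            refine Finset.sum_le_sum fun i _ => Finset.sum_le_sum fun j _ => ?_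
            split_ifs with h
            · subst h; exact hCdiag i
            · exact hCoff i j h
        _ = ∑ i : Fin n, ((2 * s - 3 * ρ * m ^ 2) + (n : ℝ) * (3 * ρ * m ^ 2)) := by
            refine Finset.sum_congr rfl fun i _ => ?_
            calc ∑ j : Fin n, (if i = j then 2 * s else 3 * ρ * m ^ 2)
                = ∑ j : Fin n, ((if i = j then 2 * s - 3 * ρ * m ^ 2 else 0) + 3 * ρ * m ^ 2) :=
                  Finset.sum_congr rfl fun j _ => by split_ifs <;> ring
              _ = (2 * s - 3 * ρ * m ^ 2) + (n : ℝ) * (3 * ρ * m ^ 2) := by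
                  rw [Finset.sum_add_distrib, Finset.sum_ite_eq, Finset.sum_const,
                    Finset.card_univ, Fintype.card_fin, nsmul_eq_mul]
                  simp
        _ = (n : ℝ) * ((2 * s - 3 * ρ * m ^ 2) + (n : ℝ) * (3 * ρ * m ^ 2)) := by
            rw [Finset.sum_const, Finset.card_univ, Fintype.card_fin, nsmul_eq_mul]
    have hBB : -(2 * m * (∑ i : Fin n,
          ∑ p : Fin (n+1) → S, TW K μ n p * (Q (p i.succ) - m)))
        ≤ 2 * m * ((n : ℝ) * (2 * ρ * m)) := by
      have h1 : |∑ i : Fin n, ∑ p : Fin (n+1) → S, TW K μ n p * (Q (p i.succ) - m)|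
          ≤ (n : ℝ) * (2 * ρ * m) := by
        calc |∑ i : Fin n, ∑ p : Fin (n+1) → S, TW K μ n p * (Q (p i.succ) - m)|
            ≤ ∑ i : Fin n, |∑ p : Fin (n+1) → S, TW K μ n p * (Q (p i.succ) - m)| :=
              Finset.abs_sum_le_sum_abs _ _
          _ ≤ ∑ _i : Fin n, 2 * ρ * m := Finset.sum_le_sum fun i _ => hB i
          _ = (n : ℝ) * (2 * ρ * m) := by
              rw [Finset.sum_const, Finset.card_univ, Fintype.card_fin, nsmul_eq_mul]
      have h2 := neg_abs_le (∑ i : Fin n, ∑ p : Fin (n+1) → S, TW K μ n p * (Q (p i.succ) - m))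
      nlinarith [h1, h2, hm0]
    have hN1 : (1 : ℝ) ≤ (n : ℝ) := by exact_mod_cast hn
    have hcast : ((n + 1 : ℕ) : ℝ) = (n : ℝ) + 1 := by push_cast; ring
    rw [hcast]
    have t1 : 0 ≤ ρ * m ^ 2 * (2 * (n:ℝ) ^ 2 + 9 * (n:ℝ) + 5) := by
      refine mul_nonneg (mul_nonneg hρ0 (sq_nonneg m)) ?_
      positivity
    have t2 : m ^ 2 ≤ (3 * (n:ℝ) + 5) * s := by nlinarith [hms, hN1, hs0]
    nlinarith [hCC, hBB, t1, t2, hs0, hN1]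
  -- Chebyshev/Markov step and conclusion
  calc ∑ p : Fin (n+1) → S,
        (if ε ≤ |(∑ i : Fin n, Q (p i.succ)) - ↑(n+1) * m| then TW K μ n p else 0)
      ≤ ∑ p : Fin (n+1) → S, ε⁻¹ ^ 2 * (TW K μ n p * ((∑ i : Fin n, Q (p i.succ)) - ↑(n+1) * m) ^ 2) := by
        refine Finset.sum_le_sum fun p _ => ?_
        split_ifs with h
        · have h2 : ε ^ 2 ≤ ((∑ i : Fin n, Q (p i.succ)) - ↑(n+1) * m) ^ 2 := by
            have := pow_le_pow_left₀ hε.le h 2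
            rwa [sq_abs] at this
          have hε' : ε ≠ 0 := ne_of_gt hε
          calc TW K μ n p = ε⁻¹ ^ 2 * (TW K μ n p * ε ^ 2) := by field_simp
            _ ≤ ε⁻¹ ^ 2 * (TW K μ n p * ((∑ i : Fin n, Q (p i.succ)) - ↑(n+1) * m) ^ 2) := by
                refine mul_le_mul_of_nonneg_left ?_ (by positivity)
                exact mul_le_mul_of_nonneg_left h2 (hTW0 p)
        · exact mul_nonneg (by positivity) (mul_nonneg (hTW0 p) (sq_nonneg _))
    _ = ε⁻¹ ^ 2 * ∑ p : Fin (n+1) → S, TW K μ n p * ((∑ i : Fin n, Q (p i.succ)) - ↑(n+1) * m) ^ 2 := by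
        rw [Finset.mul_sum]
    _ ≤ ε⁻¹ ^ 2 * (5 * (ρ * (↑(n+1) * m) ^ 2 + ↑(n+1) * s)) :=
        mul_le_mul_of_nonneg_left main (by positivity)
    _ = 5 / ε ^ 2 * (ρ * (↑(n+1) * m) ^ 2 + ↑(n+1) * s) := by
        rw [inv_pow, div_eq_mul_inv]
        ring
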